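/- Theorem 1 (Consistency of the Discriminative Likelihood Estimator): Let (Ω, 𝒫) be a probability space and (X_i)_{i∈ℕ} i.i.d. ℝ^d-valued random vectors. Let g : ℝ^m × ℝ^d → ℝ^b be measurable (the Stein feature map (θ, x) ↦ T_θ f(x)), let θ* ∈ ℝ^m, and assume E[‖g(θ*, X_1)‖] < ∞ and E[g(θ*, X_1)] = 0 (this is the content of correct model specification together with Stein's identity). Let Λ_min, Λ'_min, Λ_max > 0. Suppose for each n there are random vectors δ̂_n : Ω → ℝ^b, θ̂_n : Ω → ℝ^m and random matrices H̄11(n) ∈ ℝ^{b×b}, H̄12(n) ∈ ℝ^{b×m}, H̄21(n) := H̄12(n)ᵀ, H̄22(n) ∈ ℝ^{m×m} such that almost surely: (i) (1/n)·Σ_{i=1}^n g(θ*, X_i) + H̄11(n)·δ̂_n + H̄12(n)·(θ̂_n − θ*) = 0 and H̄21(n)·δ̂_n + H̄22(n)·(θ̂_n − θ*) = 0 (the mean-value expansion of the saddle-point first-order conditions); and (ii) H̄11(n), H̄22(n) are symmetric with λ_min(−H̄11(n)) ≥ Λ'_min, λ_min(−H̄21(n)·H̄11(n)⁻¹·H̄12(n))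 ≥ Λ_min, ‖H̄21(n)·H̄11(n)⁻¹‖ ≤ Λ_max, ‖H̄11(n)⁻¹·H̄12(n)‖ ≤ Λ_max, and 2‖H̄22(n)‖ ≤ Λ_min. Then δ̂_n → 0 and θ̂_n → θ* in probability as n → ∞. -/

import Mathlib

open Matrix MeasureTheory ProbabilityTheory Filter

/-- The Euclidean norm of a vector in `ℝ^k` represented as `Fin k → ℝ`. -/
noncomputable def euclNorm {k : ℕ} (v : Fin k → ℝ) : ℝ := Real.sqrt (v ⬝ᵥ v)

/-!
On the event where the expanded first-order conditions hold, the linear system in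
`(δ̂ₙ, θ̂ₙ - θ*)` is solved by block elimination: eliminating `δ̂ₙ` through `H̄11⁻¹` leaves the
Schur complement `-H̄21 H̄11⁻¹ H̄12` acting on `θ̂ₙ - θ*`. Its coercivity, with `2‖H̄22‖ ≤ Λmin`
absorbing the remaining term, bounds `‖θ̂ₙ - θ*‖`, and then `‖δ̂ₙ‖`, by fixed multiples of the
norm of the sample mean `Sₙ = n⁻¹ ∑ g(θ*, Xᵢ)`. By the strong law `Sₙ → E g(θ*, X₁) = 0` almost
surely, hence in probability, and the bounds carry this over to the estimators.
-/

section EuclNorm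

variable {k : ℕ}

theorem euclNorm_eq_norm (v : Fin k → ℝ) :
    euclNorm v = ‖(WithLp.toLp 2 v : EuclideanSpace ℝ (Fin k))‖ := by
  simp [euclNorm, EuclideanSpace.norm_eq, dotProduct, pow_two]

theorem euclNorm_nonneg (v : Fin k → ℝ) : 0 ≤ euclNorm v := Real.sqrt_nonneg _

theorem euclNorm_zero : euclNorm (0 : Fin k → ℝ) = 0 := by
  simp [euclNorm]

theorem euclNorm_neg (v : Fin k → ℝ) : euclNorm (-v) = euclNorm v := by
  simp [euclNorm]

theorem euclNorm_sub_le (v w : Fin k → ℝ) : euclNorm (v - w) ≤ euclNorm v + euclNorm w := by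
  simpa only [euclNorm_eq_norm, WithLp.toLp_sub] using norm_sub_le _ _

theorem dotProduct_le_euclNorm_mul (v w : Fin k → ℝ) : v ⬝ᵥ w ≤ euclNorm v * euclNorm w := by
  have h := real_inner_le_norm (WithLp.toLp 2 v : EuclideanSpace ℝ (Fin k)) (WithLp.toLp 2 w)
  simpa [euclNorm_eq_norm, EuclideanSpace.inner_eq_star_dotProduct, dotProduct_comm] using h

theorem dotProduct_self_eq_euclNorm_sq (v : Fin k → ℝ) : v ⬝ᵥ v = euclNorm v ^ 2 :=
  (Real.sq_sqrt (dotProduct_self_star_nonneg v)).symm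

theorem continuous_euclNorm : Continuous (euclNorm (k := k)) := by
  unfold euclNorm dotProduct
  fun_prop

end EuclNorm

section Coercive

variable {k : ℕ} {M : Matrix (Fin k) (Fin k) ℝ} {c : ℝ}

theorem mul_euclNorm_le_euclNorm_mulVec (hM : ∀ x, c * (x ⬝ᵥ x) ≤ x ⬝ᵥ M *ᵥ x)
    (x : Fin k → ℝ) : c * euclNorm x ≤ euclNorm (M *ᵥ x) := by
  have hx := euclNorm_nonneg x
  have h : c * euclNorm x * euclNorm x ≤ euclNorm (M *ᵥ x) * euclNorm x := by
    have := (hM x).trans (dotProduct_le_euclNorm_mul x (M *ᵥ x))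
    rw [dotProduct_self_eq_euclNorm_sq] at this
    linarith
  rcases hx.eq_or_lt with h0 | hpos
  · rw [← h0, mul_zero]
    exact euclNorm_nonneg _
  · exact le_of_mul_le_mul_right h hpos

theorem isUnit_det_of_mul_euclNorm_le (hc : 0 < c)
    (hM : ∀ x, c * euclNorm x ≤ euclNorm (M *ᵥ x)) : IsUnit M.det := by
  refine isUnit_iff_ne_zero.2 fun hdet => ?_
  obtain ⟨v, hv, hMv⟩ := Matrix.exists_mulVec_eq_zero_iff.2 hdet
  have h := hM v
  rw [hMv, euclNorm_eq_norm, euclNorm_eq_norm] at h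
  simp only [WithLp.toLp_zero, norm_zero] at h
  have : ‖(WithLp.toLp 2 v : EuclideanSpace ℝ (Fin k))‖ = 0 :=
    le_antisymm (nonpos_of_mul_nonpos_right h hc) (norm_nonneg _)
  exact hv (by simpa using this)

end Coercive

section SaddlePoint

variable {b m : ℕ} {A : Matrix (Fin b) (Fin b) ℝ} {B : Matrix (Fin b) (Fin m) ℝ}
  {C : Matrix (Fin m) (Fin m) ℝ} {S δ : Fin b → ℝ} {t : Fin m → ℝ}

theorem saddle_point_solution (hA : IsUnit A.det)
    (h₁ : S + A *ᵥ δ + B *ᵥ t = 0) (h₂ : Bᵀ *ᵥ δ + C *ᵥ t = 0) :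
    δ = -(A⁻¹ *ᵥ S) - (A⁻¹ * B) *ᵥ t ∧
      (-(Bᵀ * A⁻¹ * B)) *ᵥ t = (Bᵀ * A⁻¹) *ᵥ S - C *ᵥ t := by
  have hδ : δ = -(A⁻¹ *ᵥ S) - (A⁻¹ * B) *ᵥ t := by
    have h := congrArg (A⁻¹ *ᵥ ·) h₁
    simp only [mulVec_add, mulVec_mulVec, nonsing_inv_mul A hA, one_mulVec, mulVec_zero] at h
    rw [← mulVec_mulVec] at h ⊢
    linear_combination h
  refine ⟨hδ, ?_⟩
  rw [hδ, mulVec_sub, mulVec_neg, mulVec_mulVec, mulVec_mulVec, ← Matrix.mul_assoc] at h₂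
  rw [neg_mulVec]
  linear_combination h₂

theorem saddle_point_bounds {Λmin Λ'min Λmax : ℝ} (hΛmin : 0 < Λmin) (hΛ'min : 0 < Λ'min)
    (hΛmax : 0 ≤ Λmax) (h₁ : S + A *ᵥ δ + B *ᵥ t = 0) (h₂ : Bᵀ *ᵥ δ + C *ᵥ t = 0)
    (hA : ∀ x, Λ'min * (x ⬝ᵥ x) ≤ x ⬝ᵥ (-A) *ᵥ x)
    (hSchur : ∀ x, Λmin * (x ⬝ᵥ x) ≤ x ⬝ᵥ (-(Bᵀ * A⁻¹ * B)) *ᵥ x)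
    (hBA : ∀ x, euclNorm ((Bᵀ * A⁻¹) *ᵥ x) ≤ Λmax * euclNorm x)
    (hAB : ∀ x, euclNorm ((A⁻¹ * B) *ᵥ x) ≤ Λmax * euclNorm x)
    (hC : ∀ x, 2 * euclNorm (C *ᵥ x) ≤ Λmin * euclNorm x) :
    euclNorm t ≤ 2 * Λmax / Λmin * euclNorm S ∧
      euclNorm δ ≤ (1 / Λ'min + Λmax * (2 * Λmax / Λmin)) * euclNorm S := by
  have hA' : ∀ x, Λ'min * euclNorm x ≤ euclNorm (A *ᵥ x) := fun x => by
    simpa only [neg_mulVec, euclNorm_neg] using mul_euclNorm_le_euclNorm_mulVec hA x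
  have hAunit := isUnit_det_of_mul_euclNorm_le hΛ'min hA'
  obtain ⟨hδ, hSchur_t⟩ := saddle_point_solution hAunit h₁ h₂
  have ht : euclNorm t ≤ 2 * Λmax / Λmin * euclNorm S := by
    have h := (mul_euclNorm_le_euclNorm_mulVec hSchur t).trans
      (hSchur_t ▸ euclNorm_sub_le _ _)
    rw [div_mul_eq_mul_div, le_div_iff₀ hΛmin]
    linarith [hBA S, hC t]
  refine ⟨ht, ?_⟩
  have hAinvS : euclNorm (A⁻¹ *ᵥ S) ≤ euclNorm S / Λ'min := by
    rw [le_div_iff₀ hΛ'min, mul_comm]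
    simpa only [mulVec_mulVec, mul_nonsing_inv A hAunit, one_mulVec] using hA' (A⁻¹ *ᵥ S)
  calc euclNorm δ ≤ euclNorm (A⁻¹ *ᵥ S) + euclNorm ((A⁻¹ * B) *ᵥ t) := by
        simpa only [hδ, euclNorm_neg] using euclNorm_sub_le (-(A⁻¹ *ᵥ S)) ((A⁻¹ * B) *ᵥ t)
    _ ≤ euclNorm S / Λ'min + Λmax * (2 * Λmax / Λmin * euclNorm S) :=
        add_le_add hAinvS ((hAB t).trans (mul_le_mul_of_nonneg_left ht hΛmax))
    _ = (1 / Λ'min + Λmax * (2 * Λmax / Λmin)) * euclNorm S := by ring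

end SaddlePoint

section Probability

variable {Ω : Type*} [MeasurableSpace Ω] {μ : Measure Ω}

theorem strong_law_ae_comp {α E : Type*} [MeasurableSpace α] [NormedAddCommGroup E]
    [NormedSpace ℝ E] [CompleteSpace E] [MeasurableSpace E] [BorelSpace E]
    {X : ℕ → Ω → α} (hindep : iIndepFun X μ) (hident : ∀ i, IdentDistrib (X i) (X 0) μ μ)
    {φ : α → E} (hφ : Measurable φ) (hint : Integrable (fun ω => φ (X 0 ω)) μ) :
    ∀ᵐ ω ∂μ, Tendsto (fun n : ℕ => (n : ℝ)⁻¹ • ∑ i ∈ Finset.range n, φ (X i ω)) atTop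
      (nhds (∫ ω, φ (X 0 ω) ∂μ)) :=
  strong_law_ae (fun i => φ ∘ X i) hint
    (fun _ _ hij => (hindep.indepFun hij).comp hφ hφ) (fun i => (hident i).comp hφ)

theorem tendstoInMeasure_const_mul_euclNorm [IsFiniteMeasure μ] {k : ℕ}
    {S : ℕ → Ω → Fin k → ℝ} (hS_meas : ∀ n, AEStronglyMeasurable (S n) μ)
    (hS : ∀ᵐ ω ∂μ, Tendsto (S · ω) atTop (nhds 0)) (c : ℝ) :
    TendstoInMeasure μ (fun n ω => c * euclNorm (S n ω)) atTop 0 := by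
  refine tendstoInMeasure_of_tendsto_ae
    (fun n => ((continuous_euclNorm.comp_aestronglyMeasurable (hS_meas n)).const_mul c)) ?_
  filter_upwards [hS] with ω hω
  simpa [euclNorm_zero] using ((continuous_euclNorm.tendsto 0).comp hω).const_mul c

theorem tendsto_measure_lt_of_ae_le {ι : Type*} {l : Filter ι} {f W : ι → Ω → ℝ}
    (hW : TendstoInMeasure μ W l 0) (hf : ∀ i, ∀ᵐ ω ∂μ, f i ω ≤ W i ω) {ε : ℝ} (hε : 0 < ε) :
    Tendsto (fun i => μ {ω | ε < f i ω}) l (nhds 0) := by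
  refine tendsto_of_tendsto_of_tendsto_of_le_of_le tendsto_const_nhds
    (hW (ENNReal.ofReal ε) (ENNReal.ofReal_pos.2 hε)) (fun _ => bot_le) fun i => ?_
  refine measure_mono_ae ?_
  filter_upwards [hf i] with ω hω (hlt : ε < f i ω)
  show ENNReal.ofReal ε ≤ edist (W i ω) 0
  rw [edist_dist, Real.dist_0_eq_abs]
  exact ENNReal.ofReal_le_ofReal ((hlt.trans_le hω).le.trans (le_abs_self _))

end Probability

theorem dle_consistency_general
    {Ω : Type*} [MeasurableSpace Ω] (μ : Measure Ω) [IsProbabilityMeasure μ]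
    {d m b : ℕ}
    (X : ℕ → Ω → (Fin d → ℝ))
    (hX_indep : iIndepFun X μ)
    (hX_ident : ∀ i, IdentDistrib (X i) (X 0) μ μ)
    (g : (Fin m → ℝ) → (Fin d → ℝ) → (Fin b → ℝ))
    (hg_meas : Measurable (Function.uncurry g))
    (θstar : Fin m → ℝ)
    (hg_int : Integrable (fun ω => g θstar (X 0 ω)) μ)
    (hg_mean : ∫ ω, g θstar (X 0 ω) ∂μ = 0)
    (Λmin Λ'min Λmax : ℝ) (hΛmin : 0 < Λmin) (hΛ'min : 0 < Λ'min) (hΛmax : 0 < Λmax)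
    (δhat : ℕ → Ω → (Fin b → ℝ)) (θhat : ℕ → Ω → (Fin m → ℝ))
    (H11 : ℕ → Ω → Matrix (Fin b) (Fin b) ℝ) (H12 : ℕ → Ω → Matrix (Fin b) (Fin m) ℝ)
    (H22 : ℕ → Ω → Matrix (Fin m) (Fin m) ℝ)
    (has : ∀ n : ℕ, ∀ᵐ ω ∂μ,
      -- (i) the mean-value expansion of the first-order conditions:
      ((n : ℝ)⁻¹ • ∑ i ∈ Finset.range n, g θstar (X i ω))
          + (H11 n ω).mulVec (δhat n ω) + (H12 n ω).mulVec (θhat n ω - θstar) = 0 ∧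
      (H12 n ω)ᵀ.mulVec (δhat n ω) + (H22 n ω).mulVec (θhat n ω - θstar) = 0 ∧
      -- (ii) the regularity conditions on the Hessian blocks:
      (H11 n ω).IsSymm ∧ (H22 n ω).IsSymm ∧
      (∀ x : Fin b → ℝ, Λ'min * (x ⬝ᵥ x) ≤ x ⬝ᵥ (-(H11 n ω)).mulVec x) ∧
      (∀ x : Fin m → ℝ,
        Λmin * (x ⬝ᵥ x) ≤ x ⬝ᵥ (-((H12 n ω)ᵀ * (H11 n ω)⁻¹ * (H12 n ω))).mulVec x) ∧
      (∀ x : Fin b → ℝ, euclNorm (((H12 n ω)ᵀ * (H11 n ω)⁻¹).mulVec x) ≤ Λmax * euclNorm x) ∧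
      (∀ x : Fin m → ℝ, euclNorm (((H11 n ω)⁻¹ * (H12 n ω)).mulVec x) ≤ Λmax * euclNorm x) ∧
      (∀ x : Fin m → ℝ, 2 * euclNorm ((H22 n ω).mulVec x) ≤ Λmin * euclNorm x)) :
    (∀ ε > (0 : ℝ),
      Tendsto (fun n => μ {ω | ε < euclNorm (δhat n ω)}) atTop (nhds 0)) ∧
    (∀ ε > (0 : ℝ),
      Tendsto (fun n => μ {ω | ε < euclNorm (θhat n ω - θstar)}) atTop (nhds 0)) := by
  have hφ : Measurable (g θstar) := hg_meas.comp measurable_prodMk_left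
  set S : ℕ → Ω → Fin b → ℝ := fun n ω => (n : ℝ)⁻¹ • ∑ i ∈ Finset.range n, g θstar (X i ω)
  have hS : ∀ᵐ ω ∂μ, Tendsto (S · ω) atTop (nhds 0) :=
    hg_mean ▸ strong_law_ae_comp hX_indep hX_ident hφ hg_int
  have hS_meas : ∀ n, AEStronglyMeasurable (S n) μ := fun n =>
    ((Finset.aemeasurable_fun_sum _ fun i _ =>
      hφ.comp_aemeasurable (hX_ident i).aemeasurable_fst).fun_const_smul _).aestronglyMeasurable
  have hbounds := fun n => (has n).mono fun ω ⟨h₁, h₂, _, _, hA, hSchur, hBA, hAB, hC⟩ =>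
    saddle_point_bounds hΛmin hΛ'min hΛmax.le h₁ h₂ hA hSchur hBA hAB hC
  exact ⟨fun ε hε => tendsto_measure_lt_of_ae_le (tendstoInMeasure_const_mul_euclNorm hS_meas hS _)
      (fun n => (hbounds n).mono fun _ h => h.2) hε,
    fun ε hε => tendsto_measure_lt_of_ae_le (tendstoInMeasure_const_mul_euclNorm hS_meas hS _)
      (fun n => (hbounds n).mono fun _ h => h.1) hε⟩

/-- **Theorem 1 (Consistency of the Discriminative Likelihood Estimator).**
Given i.i.d. data `X_i`, a measurable Stein feature map `g` with
`E[‖g(θ*, X_1)‖] < ∞` and `E[g(θ*, X_1)] = 0`, and estimators `(δ̂_n, θ̂_n)` solving,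
almost surely, the mean-value expansion of the saddle-point first-order conditions with
Hessian blocks obeying the stated eigenvalue / operator-norm bounds, we have
`δ̂_n → 0` and `θ̂_n → θ*` in probability. -/
theorem dle_consistency
    {Ω : Type*} [MeasurableSpace Ω] (μ : Measure Ω) [IsProbabilityMeasure μ]
    {d m b : ℕ}
    (X : ℕ → Ω → (Fin d → ℝ)) (hX_meas : ∀ i, Measurable (X i))
    (hX_indep : iIndepFun X μ)
    (hX_ident : ∀ i, IdentDistrib (X i) (X 0) μ μ)
    (g : (Fin m → ℝ) → (Fin d → ℝ) → (Fin b → ℝ))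
    (hg_meas : Measurable (Function.uncurry g))
    (θstar : Fin m → ℝ)
    (hg_int : Integrable (fun ω => g θstar (X 0 ω)) μ)
    (hg_mean : ∫ ω, g θstar (X 0 ω) ∂μ = 0)
    (Λmin Λ'min Λmax : ℝ) (hΛmin : 0 < Λmin) (hΛ'min : 0 < Λ'min) (hΛmax : 0 < Λmax)
    (δhat : ℕ → Ω → (Fin b → ℝ)) (θhat : ℕ → Ω → (Fin m → ℝ))
    (hδ_meas : ∀ n, Measurable (δhat n)) (hθ_meas : ∀ n, Measurable (θhat n))
    (H11 : ℕ → Ω → Matrix (Fin b) (Fin b) ℝ) (H12 : ℕ → Ω → Matrix (Fin b) (Fin m) ℝ)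
    (H22 : ℕ → Ω → Matrix (Fin m) (Fin m) ℝ)
    (has : ∀ n : ℕ, ∀ᵐ ω ∂μ,
      -- (i) the mean-value expansion of the first-order conditions:
      ((n : ℝ)⁻¹ • ∑ i ∈ Finset.range n, g θstar (X i ω))
          + (H11 n ω).mulVec (δhat n ω) + (H12 n ω).mulVec (θhat n ω - θstar) = 0 ∧
      (H12 n ω)ᵀ.mulVec (δhat n ω) + (H22 n ω).mulVec (θhat n ω - θstar) = 0 ∧
      -- (ii) the regularity conditions on the Hessian blocks:
      (H11 n ω).IsSymm ∧ (H22 n ω).IsSymm ∧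
      (∀ x : Fin b → ℝ, Λ'min * (x ⬝ᵥ x) ≤ x ⬝ᵥ (-(H11 n ω)).mulVec x) ∧
      (∀ x : Fin m → ℝ,
        Λmin * (x ⬝ᵥ x) ≤ x ⬝ᵥ (-((H12 n ω)ᵀ * (H11 n ω)⁻¹ * (H12 n ω))).mulVec x) ∧
      (∀ x : Fin b → ℝ, euclNorm (((H12 n ω)ᵀ * (H11 n ω)⁻¹).mulVec x) ≤ Λmax * euclNorm x) ∧
      (∀ x : Fin m → ℝ, euclNorm (((H11 n ω)⁻¹ * (H12 n ω)).mulVec x) ≤ Λmax * euclNorm x) ∧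
      (∀ x : Fin m → ℝ, 2 * euclNorm ((H22 n ω).mulVec x) ≤ Λmin * euclNorm x)) :
    (∀ ε > (0 : ℝ),
      Tendsto (fun n => μ {ω | ε < euclNorm (δhat n ω)}) atTop (nhds 0)) ∧
    (∀ ε > (0 : ℝ),
      Tendsto (fun n => μ {ω | ε < euclNorm (θhat n ω - θstar)}) atTop (nhds 0)) :=
  dle_consistency_general μ X hX_indep hX_ident g hg_meas θstar hg_int hg_mean Λmin Λ'min Λmax hΛmin
    hΛ'min hΛmax δhat θhat H11 H12 H22 has
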